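/- arXiv:1102.4842 — 2 statements merged into one kernel-verified Lean document; each statement's English description precedes it below -/
import Mathlib

section
/- Let T be a weighted tree with positive edge weights, let u, v be two vertices of T, let P be the edge set of the unique path from u to v in T, and let R = Σ_{f ∈ P} 1/w_f be the path resistance. Then for every real vector x indexed by the vertices: (x_u − x_v)² ≤ R · Σ_{f=(a,b) ∈ P} w_f (x_a − x_b)². Equivalently, for an edge e = (u,v) of weight w_e, w_e(x_u − x_v)² ≤ stretch_T(e) · xᵀL_P x, where L_P is the Laplacian of the path P with the tree's weights. -/
/-- `IsWalkFrom endA endB F a b l` says that the list of edges `l`, each belonging to the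
edge set `F`, forms a walk from vertex `a` to vertex `b`; each edge may be traversed in
either direction. -/
def IsWalkFrom {V ε : Type} (endA endB : ε → V) (F : Finset ε) : V → V → List ε → Prop
  | a, b, [] => a = b
  | a, b, f :: rest => f ∈ F ∧
      ((endA f = a ∧ IsWalkFrom endA endB F (endB f) b rest) ∨
       (endB f = a ∧ IsWalkFrom endA endB F (endA f) b rest))

lemma two_term_cs (e t r1 s1 R S : ℝ) (hr1 : 0 ≤ r1) (hs1 : 0 ≤ s1)
    (hR : 0 ≤ R) (hS : 0 ≤ S) (he : e ^ 2 = r1 * s1) (ht : t ^ 2 ≤ R * S) :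
    (e + t) ^ 2 ≤ (r1 + R) * (s1 + S) := by
  have hb : 0 ≤ r1 * S + R * s1 := by positivity
  have hsq : (2 * e * t) ^ 2 ≤ (r1 * S + R * s1) ^ 2 := by
    nlinarith [sq_nonneg (r1 * S - R * s1), mul_nonneg (mul_nonneg hr1 hs1) (sub_nonneg.2 ht),
      sq_nonneg t]
  have h1 : 2 * e * t ≤ r1 * S + R * s1 := by
    have := Real.sqrt_le_sqrt hsq
    rw [Real.sqrt_sq_eq_abs, Real.sqrt_sq_eq_abs] at this
    calc 2 * e * t ≤ |2 * e * t| := le_abs_self _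
      _ ≤ |r1 * S + R * s1| := this
      _ = r1 * S + R * s1 := abs_of_nonneg hb
  nlinarith [h1, ht, he]

lemma walk_cs {n m : ℕ} (endA endB : Fin m → Fin n) (w : Fin m → ℝ)
    (hw : ∀ f, 0 < w f) (x : Fin n → ℝ) :
    ∀ (l : List (Fin m)) (a b : Fin n),
      IsWalkFrom endA endB Finset.univ a b l →
      (x a - x b) ^ 2 ≤
        (l.map fun f => 1 / w f).sum * (l.map fun f => w f * (x (endA f) - x (endB f)) ^ 2).sum := by
  intro l
  induction l with
  | nil =>
    intro a b h
    cases h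
    simp
  | cons f rest ih =>
    intro a b h
    obtain ⟨-, hor⟩ := h
    have hRn : 0 ≤ (rest.map fun f => 1 / w f).sum := by
      apply List.sum_nonneg; intro y hy
      simp only [List.mem_map] at hy
      obtain ⟨g, -, rfl⟩ := hy
      have := hw g; positivity
    have hSn : 0 ≤ (rest.map fun f => w f * (x (endA f) - x (endB f)) ^ 2).sum := by
      apply List.sum_nonneg; intro y hy
      simp only [List.mem_map] at hy
      obtain ⟨g, -, rfl⟩ := hy
      have := hw g; positivity
    have hwf := hw f
    rcases hor with ⟨hfa, hrest⟩ | ⟨hfa, hrest⟩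
    · have ih' := ih (endB f) b hrest
      have key : x a - x b = (x (endA f) - x (endB f)) + (x (endB f) - x b) := by
        rw [hfa]; ring
      rw [key]
      simp only [List.map_cons, List.sum_cons]
      apply two_term_cs _ _ _ _ _ _ (by positivity) (by positivity) hRn hSn _ ih'
      field_simp
    · have ih' := ih (endA f) b hrest
      have key : x a - x b = (x (endB f) - x (endA f)) + (x (endA f) - x b) := by
        rw [hfa]; ring
      rw [key]
      simp only [List.map_cons, List.sum_cons]
      apply two_term_cs _ _ _ _ _ _ (by positivity) (by positivity) hRn hSn _ ih'
      field_simp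
      ring

/-- Let `T` be a weighted tree with positive edge weights (vertices `Fin n`, edges `Fin m`
with endpoints `endA f`, `endB f` and weight `w f`; being a tree means `m = n - 1` and
connectedness), let `u, v` be two vertices and `P` the (unique) path from `u` to `v` in
`T`, given as a list of edges with no repetitions.  Let `R = ∑_{f ∈ P} 1/w_f` be the path
resistance.  Then for every real vector `x` indexed by the vertices,
`(x_u - x_v)² ≤ R · ∑_{f ∈ P} w_f (x_{endA f} - x_{endB f})²`;
equivalently, for an edge `e = (u,v)` of weight `w_e > 0`,
`w_e (x_u - x_v)² ≤ stretch_T(e) · xᵀ L_P x` where `stretch_T(e) = w_e · R`. -/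
theorem path_resistance_ineq
    (n m : ℕ) (endA endB : Fin m → Fin n) (w : Fin m → ℝ)
    (hw : ∀ f, 0 < w f)
    (htree_card : m = n - 1)
    (htree_conn : ∀ a b : Fin n, ∃ l, IsWalkFrom endA endB Finset.univ a b l)
    (u v : Fin n) (P : List (Fin m))
    (hP : IsWalkFrom endA endB Finset.univ u v P) (hPnd : P.Nodup)
    (R : ℝ) (hR : R = (P.map fun f => 1 / w f).sum)
    (x : Fin n → ℝ) :
    (x u - x v) ^ 2 ≤ R * (P.map fun f => w f * (x (endA f) - x (endB f)) ^ 2).sum ∧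
    ∀ w_e : ℝ, 0 < w_e →
      w_e * (x u - x v) ^ 2
        ≤ (w_e * R) * (P.map fun f => w f * (x (endA f) - x (endB f)) ^ 2).sum := by
  have h1 : (x u - x v) ^ 2 ≤ R * (P.map fun f => w f * (x (endA f) - x (endB f)) ^ 2).sum := by
    rw [hR]; exact walk_cs endA endB w hw x P u v hP
  refine ⟨h1, fun w_e hwe => ?_⟩
  calc w_e * (x u - x v) ^ 2
      ≤ w_e * (R * (P.map fun f => w f * (x (endA f) - x (endB f)) ^ 2).sum) :=
        mul_le_mul_of_nonneg_left h1 hwe.le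
    _ = (w_e * R) * (P.map fun f => w f * (x (endA f) - x (endB f)) ^ 2).sum := by ring
end

section
/- (Correctness of length rounding.) Let d₁ ≤ d₂ ≤ … ≤ d_m be a nondecreasing sequence of positive reals. Then there exists a sequence d̃₁, …, d̃_m such that: (i) each d̃_i equals d_j for some j ≤ i; (ii) d_i/2 ≤ d̃_i ≤ d_i for every i; (iii) d̃ is nondecreasing; and (iv) whenever i < j and d̃_i ≠ d̃_j, one has 2·d̃_i < d̃_j. -/
open Classical in
/-- Anchor index of the rounding procedure. -/
noncomputable def roundAnchor (D : ℕ → ℝ) : ℕ → ℕ :=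
  fun n => Nat.rec 0 (fun k ih => if D (k+1) ≤ 2 * D ih then ih else k+1) n

lemma roundAnchor_zero (D : ℕ → ℝ) : roundAnchor D 0 = 0 := rfl

open Classical in
lemma roundAnchor_succ (D : ℕ → ℝ) (n : ℕ) :
    roundAnchor D (n+1) =
      if D (n+1) ≤ 2 * D (roundAnchor D n) then roundAnchor D n else n+1 := rfl

lemma roundAnchor_le (D : ℕ → ℝ) : ∀ n, roundAnchor D n ≤ n
  | 0 => le_refl 0
  | n+1 => by
    rw [roundAnchor_succ]
    split
    · exact (roundAnchor_le D n).trans (Nat.le_succ n)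
    · exact le_refl _

lemma roundAnchor_le_two_mul (D : ℕ → ℝ) (hpos : ∀ k, 0 < D k) :
    ∀ n, D n ≤ 2 * D (roundAnchor D n)
  | 0 => by
    rw [roundAnchor_zero]
    nlinarith [hpos 0]
  | n+1 => by
    rw [roundAnchor_succ]
    split
    · assumption
    · nlinarith [hpos (n+1)]

lemma roundAnchor_mono (D : ℕ → ℝ) : Monotone (roundAnchor D) := by
  apply monotone_nat_of_le_succ
  intro n
  rw [roundAnchor_succ]
  split
  · exact le_refl _
  · exact (roundAnchor_le D n).trans (Nat.le_succ n)

lemma roundAnchor_key (D : ℕ → ℝ) (hmono : Monotone D) :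
    ∀ j, ∀ i ≤ j, D (roundAnchor D i) = D (roundAnchor D j) ∨
      2 * D (roundAnchor D i) < D (roundAnchor D j)
  | 0 => by
    intro i hi
    simp_all
  | j+1 => by
    intro i hi
    rcases Nat.lt_or_ge i (j+1) with h | h
    · have hij : i ≤ j := Nat.lt_succ_iff.mp h
      have prev := roundAnchor_key D hmono j i hij
      rw [roundAnchor_succ]
      split
      · exact prev
      · rename_i hgt
        push_neg at hgt
        right
        have hle : D (roundAnchor D i) ≤ D (roundAnchor D j) :=
          hmono (roundAnchor_mono D hij)
        linarith
    · have : i = j+1 := le_antisymm hi h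
      subst this
      exact Or.inl rfl

/-- **Correctness of length rounding.**  Given a nondecreasing sequence
`d₁ ≤ … ≤ d_m` of positive reals, there is a rounded sequence `d̃` such that:
(i) each `d̃ i` equals `d j` for some `j ≤ i`;
(ii) `d i / 2 ≤ d̃ i ≤ d i` for every `i`;
(iii) `d̃` is nondecreasing; and
(iv) whenever `i < j` and `d̃ i ≠ d̃ j`, we have `2·d̃ i < d̃ j`. -/
theorem roundLengths_correct
    (m : ℕ) (d : Fin m → ℝ) (hpos : ∀ i, 0 < d i) (hmono : Monotone d) :
    ∃ dt : Fin m → ℝ,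
      (∀ i, ∃ j, j ≤ i ∧ dt i = d j) ∧
      (∀ i, d i / 2 ≤ dt i ∧ dt i ≤ d i) ∧
      Monotone dt ∧
      (∀ i j, i < j → dt i ≠ dt j → 2 * dt i < dt j) := by
  rcases Nat.eq_zero_or_pos m with hm | hm
  · subst hm
    exact ⟨d, fun i => i.elim0, fun i => i.elim0,
      fun i => i.elim0, fun i => i.elim0⟩
  -- Extend d to a monotone positive function on ℕ
  set D : ℕ → ℝ := fun n => if h : n < m then d ⟨n, h⟩ else d ⟨m-1, Nat.sub_lt hm one_pos⟩ with hD
  have hDeq : ∀ i : Fin m, D i.val = d i := by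
    intro i; simp [hD, i.isLt]
  have hDpos : ∀ n, 0 < D n := by
    intro n; simp only [hD]; split <;> apply hpos
  have hDmono : Monotone D := by
    intro a b hab
    simp only [hD]
    split <;> split
    · exact hmono hab
    · rename_i ha hb
      refine hmono ?_
      change a ≤ m - 1
      omega
    · rename_i ha hb; omega
    · exact le_refl _
  have hanch : ∀ i : Fin m, roundAnchor D i.val < m :=
    fun i => lt_of_le_of_lt (roundAnchor_le D i.val) i.isLt
  refine ⟨fun i => D (roundAnchor D i.val), ?_, ?_, ?_, ?_⟩
  · intro i
    refine ⟨⟨roundAnchor D i.val, hanch i⟩, ?_, ?_⟩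
    · exact roundAnchor_le D i.val
    · exact hDeq ⟨roundAnchor D i.val, hanch i⟩
  · intro i
    constructor
    · have := roundAnchor_le_two_mul D hDpos i.val
      rw [hDeq i] at this
      linarith
    · rw [← hDeq i]
      exact hDmono (roundAnchor_le D i.val)
  · intro a b hab
    exact hDmono (roundAnchor_mono D hab)
  · intro i j hij hne
    rcases roundAnchor_key D hDmono j.val i.val (le_of_lt hij) with h | h
    · exact absurd h hne
    · exact h
end
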